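/- For the Cherry Hamiltonian H(q₁,q₂,p₁,p₂) = (1/2)(q₁² + p₁²) - (q₂² + p₂²) + (1/2)p₂(p₁² - q₁²) - q₁q₂p₁, the explicit family of curves q₁(t) = √2·cos(t)/(t-τ), q₂(t) = cos(2t)/(t-τ), p₁(t) = -√2·sin(t)/(t-τ), p₂(t) = sin(2t)/(t-τ), defined for t < τ, satisfies Hamilton's equations q̇ᵢ = ∂H/∂pᵢ, ṗᵢ = -∂H/∂qᵢ. -/

import Mathlib

/-- The Cherry Hamiltonian
`H(q₁,q₂,p₁,p₂) = ½(q₁² + p₁²) - (q₂² + p₂²) + ½p₂(p₁² - q₁²) - q₁q₂p₁`. -/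
noncomputable def cherryH (q1 q2 p1 p2 : ℝ) : ℝ :=
  (1 / 2) * (q1 ^ 2 + p1 ^ 2) - (q2 ^ 2 + p2 ^ 2)
    + (1 / 2) * p2 * (p1 ^ 2 - q1 ^ 2) - q1 * q2 * p1

/-!
Every coordinate has the form `f t / (t - τ)` with `f` trigonometric, so its derivative is
`f' t / (t - τ) - f t / (t - τ) ^ 2`. The `1 / (t - τ)` terms are matched by the quadratic part
of `H`, two oscillators of frequencies `1` and `2` turning in opposite directions, which `f`
solves; the `1 / (t - τ) ^ 2` terms are matched by the cubic part, which on `f` returns `-f`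
thanks to the `1 : 2` resonance (`cos (2t - t) = cos t`, `sin (2t - t) = sin t`).
-/

open Real

theorem deriv_cherryH_p1 (q1 q2 p1 p2 : ℝ) :
    deriv (fun x => cherryH q1 q2 x p2) p1 = p1 + p2 * p1 - q1 * q2 := by
  simp (disch := fun_prop) [cherryH]; ring

theorem deriv_cherryH_p2 (q1 q2 p1 p2 : ℝ) :
    deriv (fun x => cherryH q1 q2 p1 x) p2 = -2 * p2 + (p1 ^ 2 - q1 ^ 2) / 2 := by
  simp (disch := fun_prop) [cherryH]; ring

theorem deriv_cherryH_q1 (q1 q2 p1 p2 : ℝ) :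
    deriv (fun x => cherryH x q2 p1 p2) q1 = q1 - p2 * q1 - q2 * p1 := by
  simp (disch := fun_prop) [cherryH]; ring

theorem deriv_cherryH_q2 (q1 q2 p1 p2 : ℝ) :
    deriv (fun x => cherryH q1 x p1 p2) q2 = -2 * q2 - q1 * p1 := by
  simp (disch := fun_prop) [cherryH]

theorem HasDerivAt.div_sub_const {𝕜 : Type*} [NontriviallyNormedField 𝕜] {f : 𝕜 → 𝕜}
    {f' τ t : 𝕜} (hf : HasDerivAt f f' t) (ht : t ≠ τ) :
    HasDerivAt (fun x => f x / (x - τ)) (f' / (t - τ) - f t / (t - τ) ^ 2) t := by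
  have hτ : t - τ ≠ 0 := sub_ne_zero.2 ht
  exact (hf.div ((hasDerivAt_id' t).sub_const τ) hτ).congr_deriv (by field_simp)

/-- The explicit family of curves
`q₁(t) = √2 cos t/(t-τ)`, `q₂(t) = cos 2t/(t-τ)`, `p₁(t) = -√2 sin t/(t-τ)`,
`p₂(t) = sin 2t/(t-τ)` satisfies Hamilton's equations `q̇ᵢ = ∂H/∂pᵢ`, `ṗᵢ = -∂H/∂qᵢ`
for the Cherry Hamiltonian, for all `t < τ`. -/
theorem cherry_explicit_solution (τ : ℝ)
    (q1 q2 p1 p2 : ℝ → ℝ)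
    (hq1 : q1 = fun t => Real.sqrt 2 * Real.cos t / (t - τ))
    (hq2 : q2 = fun t => Real.cos (2 * t) / (t - τ))
    (hp1 : p1 = fun t => -(Real.sqrt 2 * Real.sin t) / (t - τ))
    (hp2 : p2 = fun t => Real.sin (2 * t) / (t - τ)) :
    ∀ t : ℝ, t < τ →
      HasDerivAt q1 (deriv (fun x => cherryH (q1 t) (q2 t) x (p2 t)) (p1 t)) t ∧
      HasDerivAt q2 (deriv (fun x => cherryH (q1 t) (q2 t) (p1 t) x) (p2 t)) t ∧
      HasDerivAt p1 (-(deriv (fun x => cherryH x (q2 t) (p1 t) (p2 t)) (q1 t))) t ∧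
      HasDerivAt p2 (-(deriv (fun x => cherryH (q1 t) x (p1 t) (p2 t)) (q2 t))) t := by
  subst hq1 hq2 hp1 hp2
  intro t ht
  have hτ : t - τ ≠ 0 := sub_ne_zero.2 ht.ne
  have hpyth := sin_sq_add_cos_sq t
  have hsqrt : √2 ^ 2 = 2 := sq_sqrt zero_le_two
  simp only [deriv_cherryH_p1, deriv_cherryH_p2, deriv_cherryH_q1, deriv_cherryH_q2]
  refine ⟨?_, ?_, ?_, ?_⟩
  · refine (((hasDerivAt_cos t).const_mul _).div_sub_const ht.ne).congr_deriv ?_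
    simp only [cos_two_mul', sin_two_mul]
    field_simp
    linear_combination cos t * hpyth
  · refine ((((hasDerivAt_id' t).const_mul 2).cos).div_sub_const ht.ne).congr_deriv ?_
    simp only [cos_two_mul', sin_two_mul]
    field_simp
    linear_combination (cos t ^ 2 - sin t ^ 2) * hsqrt
  · refine (((hasDerivAt_sin t).const_mul _).fun_neg.div_sub_const ht.ne).congr_deriv ?_
    simp only [cos_two_mul', sin_two_mul]
    field_simp
    linear_combination -sin t * hpyth
  · refine ((((hasDerivAt_id' t).const_mul 2).sin).div_sub_const ht.ne).congr_deriv ?_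
    simp only [cos_two_mul', sin_two_mul]
    field_simp
    linear_combination (sin t * cos t) * hsqrt
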